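/- Suppose w is nonnegative and locally integrable on ℝ, and for 0 < x < y < 1 define C_w⁺(x) = sup{w({M⁺1_E > x})/w(E) : 0 < w(E) < ∞}. If 0 < λ < α < 1 then C_w⁺(λ) ≤ C_w⁺(λ/α) · C_w⁺(α), and consequently 0 ≤ C_w⁺(λ) - C_w⁺(λ/α) ≤ C_w⁺(λ/α)(C_w⁺(α) - 1). -/

import Mathlib

open MeasureTheory Set

noncomputable def Mplus (f : ℝ → ℝ) (x : ℝ) : ℝ :=
  ⨆ h : {h : ℝ // 0 < h}, (h.1)⁻¹ * ∫ t in x..(x + h.1), |f t|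

noncomputable def Mminus (f : ℝ → ℝ) (x : ℝ) : ℝ :=
  ⨆ h : {h : ℝ // 0 < h}, (h.1)⁻¹ * ∫ t in (x - h.1)..x, |f t|

noncomputable def halo (γ : ℝ) (E : Set ℝ) : Set ℝ :=
  {x | γ < Mplus (E.indicator fun _ => (1:ℝ)) x}

noncomputable def wsize (w : ℝ → ℝ) (E : Set ℝ) : ENNReal :=
  ∫⁻ x in E, ENNReal.ofReal (w x)

noncomputable def tauber (w : ℝ → ℝ) (α : ℝ) : ENNReal :=
  ⨆ E : {E : Set ℝ // MeasurableSet E ∧ 0 < wsize w E ∧ wsize w E < ⊤},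
    wsize w (halo α E.1) / wsize w E.1

/-!
If `x ∈ H⁺_γ(E)`, pick `y > x` with `|E ∩ (x, y]| > γ (y - x)` and put `E' = E ∩ (x, y]`. Either
`x` lies in the open set `H⁺_α(E') ⊆ H⁺_α(E)`, or the left endpoint of every component of
`H⁺_α(E') ∩ (x, y)` lies outside `H⁺_α(E')`, so `E'` has density at most `α` on each of them
(rising sun). Since almost every point of `E'` lies in `H⁺_α(E')` (one-sided Lebesgue density),
`|E'| ≤ α |H⁺_α(E) ∩ (x, y]|`, i.e. `x ∈ H⁺_{γ/α}(H⁺_α(E))`. Testing `C_w⁺(γ/α)` on `H⁺_α(E)` and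
`C_w⁺(α)` on `E` gives `C_w⁺(γ) ≤ C_w⁺(γ/α) C_w⁺(α)`.
-/

open Topology
open scoped ENNReal

section Components

variable {X : Type*} [TopologicalSpace X]

theorem pairwise_disjoint_image_connectedComponentIn (F s : Set X) :
    (connectedComponentIn F '' s).Pairwise Disjoint := by
  rintro _ ⟨x, -, rfl⟩ _ ⟨y, -, rfl⟩ hne
  refine disjoint_left.2 fun z hzx hzy => hne ?_
  rw [connectedComponentIn_eq hzx, connectedComponentIn_eq hzy]

theorem IsOpen.sUnion_image_connectedComponentIn [LocallyConnectedSpace X] {V T : Set X}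
    (hV : IsOpen V) (hT : Dense T) : ⋃₀ (connectedComponentIn V '' (V ∩ T)) = V := by
  refine subset_antisymm (sUnion_subset ?_) fun z hz => ?_
  · rintro _ ⟨q, -, rfl⟩
    exact connectedComponentIn_subset V q
  · obtain ⟨q, hqT, hq⟩ :=
      hT.exists_mem_open hV.connectedComponentIn ⟨z, mem_connectedComponentIn hz⟩
    refine ⟨_, ⟨q, ⟨connectedComponentIn_subset V z hq, hqT⟩, rfl⟩, ?_⟩
    rw [← connectedComponentIn_eq hq]
    exact mem_connectedComponentIn hz

end Components

theorem IsOpen.csInf_connectedComponentIn_notMem {V : Set ℝ} (hV : IsOpen V) {q : ℝ}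
    (hq : q ∈ V) (hb : BddBelow (connectedComponentIn V q)) :
    sInf (connectedComponentIn V q) ∉ V := by
  set S := connectedComponentIn V q
  intro ha
  obtain ⟨z, hza, hzS⟩ :=
    mem_closure_iff_nhds.1 (csInf_mem_closure ⟨q, mem_connectedComponentIn hq⟩ hb) _
      (connectedComponentIn_mem_nhds (hV.mem_nhds ha))
  have hS : S ∈ 𝓝 (sInf S) := by
    have := connectedComponentIn_mem_nhds (hV.mem_nhds ha)
    rwa [connectedComponentIn_eq hza, ← connectedComponentIn_eq hzS] at this
  obtain ⟨l, hl, hlS⟩ := exists_Ioc_subset_of_mem_nhds hS ⟨sInf S - 1, by linarith⟩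
  have := csInf_le hb (hlS ⟨by linarith, by linarith⟩ : (l + sInf S) / 2 ∈ S)
  linarith

/-- Riesz's rising sun argument, summed over the connected components of `V`. -/
theorem IsOpen.volume_inter_le_mul {V D : Set ℝ} {c : ℝ≥0∞} (hV : IsOpen V)
    (hVb : Bornology.IsBounded V)
    (h : ∀ a b, a ∉ V → Ioo a b ⊆ V → volume (D ∩ Ioo a b) ≤ c * volume (Ioo a b)) :
    volume (D ∩ V) ≤ c * volume V := by
  set K := connectedComponentIn V '' (V ∩ range ((↑) : ℚ → ℝ))
  have hK : K.Countable := ((countable_range _).mono inter_subset_right).image _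
  have hVK : ⋃₀ K = V := hV.sUnion_image_connectedComponentIn Rat.denseRange_cast
  have hcomp : ∀ S ∈ K, volume (D ∩ S) ≤ c * volume S := by
    rintro _ ⟨q, ⟨hq, -⟩, rfl⟩
    set S := connectedComponentIn V q
    have hSV : S ⊆ V := connectedComponentIn_subset V q
    have hb : BddBelow S := (hVb.subset hSV).bddBelow
    have ha : BddAbove S := (hVb.subset hSV).bddAbove
    have hIoo : Ioo (sInf S) (sSup S) ⊆ S :=
      (isConnected_connectedComponentIn_iff.2 hq).Ioo_csInf_csSup_subset hb ha
    calc volume (D ∩ S) ≤ volume (D ∩ Icc (sInf S) (sSup S)) :=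
          measure_mono (inter_subset_inter_right _ (subset_Icc_csInf_csSup hb ha))
      _ = volume (D ∩ Ioo (sInf S) (sSup S)) :=
          measure_congr ((ae_eq_refl D).inter Ioo_ae_eq_Icc).symm
      _ ≤ c * volume (Ioo (sInf S) (sSup S)) :=
          h _ _ (hV.csInf_connectedComponentIn_notMem hq hb) (hIoo.trans hSV)
      _ ≤ c * volume S := by gcongr
  calc volume (D ∩ V) = volume (⋃ S ∈ K, D ∩ S) := by rw [← hVK, sUnion_eq_biUnion, inter_iUnion₂]
    _ ≤ ∑' S : K, volume (D ∩ S) := measure_biUnion_le _ hK _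
    _ ≤ ∑' S : K, c * volume (S : Set ℝ) := ENNReal.tsum_le_tsum fun S => hcomp S S.2
    _ = c * volume V := by
      rw [ENNReal.tsum_mul_left, ← measure_sUnion hK
        (pairwise_disjoint_image_connectedComponentIn _ _)
        (by rintro _ ⟨q, -, rfl⟩; exact hV.connectedComponentIn.measurableSet), hVK]

theorem continuous_intervalIntegral_add {F : Type*} [NormedAddCommGroup F] [NormedSpace ℝ F]
    {f : ℝ → F} (hf : ∀ a b, IntervalIntegrable f volume a b) (h : ℝ) :
    Continuous fun x => ∫ t in x..x + h, f t := by
  have hF := intervalIntegral.continuous_primitive hf 0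
  have key : (fun x => ∫ t in x..x + h, f t) =
      fun x => (∫ t in 0..x + h, f t) - ∫ t in 0..x, f t := by
    funext x
    rw [intervalIntegral.integral_interval_sub_left (hf 0 _) (hf 0 _)]
  rw [key]
  exact (hF.comp (continuous_add_const h)).sub hF

section Halo

variable {E : Set ℝ}

theorem intervalIntegral_abs_indicator_one (hE : MeasurableSet E) {x y : ℝ} (hxy : x ≤ y) :
    ∫ t in x..y, |E.indicator (fun _ => (1:ℝ)) t| = volume.real (E ∩ Ioc x y) := by
  have habs : (fun t => |E.indicator (fun _ => (1:ℝ)) t|) = E.indicator 1 :=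
    funext fun t => abs_of_nonneg (indicator_nonneg (fun _ _ => zero_le_one) t)
  rw [intervalIntegral.integral_of_le hxy, habs, integral_indicator_one hE,
    measureReal_restrict_apply hE]

theorem intervalIntegrable_abs_indicator_one (hE : MeasurableSet E) (a b : ℝ) :
    IntervalIntegrable (fun t => |E.indicator (fun _ => (1:ℝ)) t|) volume a b :=
  IntervalIntegrable.abs ⟨intervalIntegrable_const.1.indicator hE,
    intervalIntegrable_const.2.indicator hE⟩

theorem bddAbove_Mplus_indicator (hE : MeasurableSet E) (x : ℝ) :
    BddAbove (range fun h : {h : ℝ // 0 < h} =>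
      h.1⁻¹ * ∫ t in x..x + h.1, |E.indicator (fun _ => (1:ℝ)) t|) := by
  refine ⟨1, forall_mem_range.2 fun ⟨h, hh⟩ => ?_⟩
  rw [intervalIntegral_abs_indicator_one hE (by linarith), inv_mul_le_one₀ hh]
  calc volume.real (E ∩ Ioc x (x + h)) ≤ volume.real (Ioc x (x + h)) :=
        measureReal_mono inter_subset_right measure_Ioc_lt_top.ne
    _ = h := by rw [Real.volume_real_Ioc_of_le (by linarith)]; ring

theorem isOpen_halo (hE : MeasurableSet E) (γ : ℝ) : IsOpen (halo γ E) :=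
  (lowerSemicontinuous_ciSup (bddAbove_Mplus_indicator hE) fun h =>
    (continuous_const.mul (continuous_intervalIntegral_add
      (intervalIntegrable_abs_indicator_one hE) h.1)).lowerSemicontinuous).isOpen_preimage γ

theorem halo_mono {A B : Set ℝ} (hA : MeasurableSet A) (hB : MeasurableSet B) (hAB : A ⊆ B)
    (γ : ℝ) : halo γ A ⊆ halo γ B := fun x hx =>
  hx.trans_le <| ciSup_mono (bddAbove_Mplus_indicator hB x) fun ⟨h, hh⟩ => by
    rw [intervalIntegral_abs_indicator_one hA (by linarith),
      intervalIntegral_abs_indicator_one hB (by linarith)]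
    exact mul_le_mul_of_nonneg_left (measureReal_mono (inter_subset_inter_left _ hAB)
      (measure_inter_lt_top_of_right_ne_top measure_Ioc_lt_top.ne).ne) (inv_nonneg.2 hh.le)

theorem mem_halo_iff (hE : MeasurableSet E) {γ : ℝ} (hγ : 0 ≤ γ) {x : ℝ} :
    x ∈ halo γ E ↔ ∃ y > x, ENNReal.ofReal γ * volume (Ioc x y) < volume (E ∩ Ioc x y) := by
  have key : ∀ y, x < y → (γ < (y - x)⁻¹ * ∫ t in x..y, |E.indicator (fun _ => (1:ℝ)) t| ↔
      ENNReal.ofReal γ * volume (Ioc x y) < volume (E ∩ Ioc x y)) := by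
    intro y hxy
    rw [intervalIntegral_abs_indicator_one hE hxy.le, Real.volume_Ioc, ← ENNReal.ofReal_mul hγ,
      ENNReal.ofReal_lt_iff_lt_toReal (by nlinarith)
        (measure_inter_lt_top_of_right_ne_top measure_Ioc_lt_top.ne).ne,
      lt_inv_mul_iff₀ (sub_pos.2 hxy), mul_comm]
    rfl
  change γ < Mplus _ x ↔ _
  rw [Mplus, lt_ciSup_iff (bddAbove_Mplus_indicator hE x)]
  constructor
  · rintro ⟨⟨h, hh⟩, hlt⟩
    exact ⟨x + h, by linarith, (key _ (by linarith)).1 (by simpa using hlt)⟩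
  · rintro ⟨y, hxy, hlt⟩
    exact ⟨⟨y - x, sub_pos.2 hxy⟩, by simpa using (key y hxy).2 hlt⟩

theorem mem_halo_of_Ioc_subset (hE : MeasurableSet E) {γ : ℝ} (hγ0 : 0 ≤ γ) (hγ : γ < 1)
    {x y : ℝ} (hxy : x < y) (hsub : Ioc x y ⊆ E) : x ∈ halo γ E := by
  refine (mem_halo_iff hE hγ0).2 ⟨y, hxy, ?_⟩
  rw [inter_eq_right.2 hsub, Real.volume_Ioc, ← ENNReal.ofReal_mul hγ0,
    ENNReal.ofReal_lt_ofReal_iff (sub_pos.2 hxy)]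
  nlinarith

/-- One-sided Lebesgue density theorem. -/
theorem volume_diff_halo_eq_zero (hE : MeasurableSet E) {γ : ℝ} (hγ0 : 0 ≤ γ) (hγ : γ < 1) :
    volume (E \ halo γ E) = 0 := by
  refine ae_le_set.1 ((ae_restrict_iff' hE).1 <|
    ((IsUnifLocDoublingMeasure.vitaliFamily volume 1).ae_tendsto_measure_inter_div E).mono
      fun x hx => ?_)
  obtain ⟨y, hy, hxy⟩ := (((hx.comp (Real.tendsto_Icc_vitaliFamily_right x)).eventually
    (eventually_gt_nhds (ENNReal.ofReal_lt_one.2 hγ))).and self_mem_nhdsWithin).exists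
  refine (mem_halo_iff hE hγ0).2 ⟨y, hxy, ?_⟩
  rw [measure_congr ((ae_eq_refl E).inter Ioc_ae_eq_Icc), measure_congr Ioc_ae_eq_Icc]
  exact ENNReal.mul_lt_of_lt_div hy

theorem volume_le_mul_volume_halo_inter {D : Set ℝ} (hD : MeasurableSet D) {α x y : ℝ}
    (hα0 : 0 ≤ α) (hα : α < 1) (hDxy : D ⊆ Ioc x y) (hx : x ∉ halo α D) :
    volume D ≤ ENNReal.ofReal α * volume (halo α D ∩ Ioc x y) := by
  set U := halo α D
  set W := U ∩ Ioo x y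
  have hW : volume (D ∩ W) ≤ ENNReal.ofReal α * volume W := by
    refine (isOpen_halo hD α).inter isOpen_Ioo |>.volume_inter_le_mul
      ((Metric.isBounded_Ioo x y).subset inter_subset_right) fun a b haW hsub => ?_
    rcases le_or_gt b a with hba | hab
    · simp [Ioo_eq_empty_of_le hba]
    obtain ⟨hxa, hby⟩ := (Ioo_subset_Ioo_iff hab).1 (hsub.trans inter_subset_right)
    have haU : a ∉ U := fun haU =>
      haW ⟨haU, lt_of_le_of_ne hxa (by rintro rfl; exact hx haU), hab.trans_le hby⟩
    have hle : volume (D ∩ Ioc a b) ≤ ENNReal.ofReal α * volume (Ioc a b) :=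
      not_lt.1 fun hlt => haU ((mem_halo_iff hD hα0).2 ⟨b, hab, hlt⟩)
    calc volume (D ∩ Ioo a b) ≤ volume (D ∩ Ioc a b) :=
          measure_mono (inter_subset_inter_right _ Ioo_subset_Ioc_self)
      _ ≤ ENNReal.ofReal α * volume (Ioc a b) := hle
      _ = ENNReal.ofReal α * volume (Ioo a b) := by rw [Real.volume_Ioc, Real.volume_Ioo]
  have hnull : volume (D \ W) = 0 := by
    refine measure_mono_null (fun z ⟨hzD, hzW⟩ => ?_)
      (measure_union_null (volume_diff_halo_eq_zero hD hα0 hα) (measure_singleton y))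
    by_cases hzU : z ∈ U
    · exact Or.inr (le_antisymm (hDxy hzD).2 (not_lt.1 fun hzy => hzW ⟨hzU, (hDxy hzD).1, hzy⟩))
    · exact Or.inl ⟨hzD, hzU⟩
  calc volume D ≤ volume (D ∩ W) := by simpa [hnull] using measure_le_inter_add_sdiff volume D W
    _ ≤ ENNReal.ofReal α * volume W := hW
    _ ≤ ENNReal.ofReal α * volume (U ∩ Ioc x y) := by
        gcongr
        exact inter_subset_inter_right _ Ioo_subset_Ioc_self

theorem halo_subset_halo_div_halo (hE : MeasurableSet E) {γ α : ℝ} (hγ : 0 ≤ γ) (hγα : γ < α)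
    (hα : α < 1) : halo γ E ⊆ halo (γ / α) (halo α E) := by
  have hα0 : 0 < α := hγ.trans_lt hγα
  have hF : MeasurableSet (halo α E) := (isOpen_halo hE α).measurableSet
  have hγα0 : 0 ≤ γ / α := div_nonneg hγ hα0.le
  intro x hx
  obtain ⟨y, hxy, hEy⟩ := (mem_halo_iff hE hγ).1 hx
  set E' := E ∩ Ioc x y
  have hE' : MeasurableSet E' := hE.inter measurableSet_Ioc
  have hUF : halo α E' ⊆ halo α E := halo_mono hE' hE inter_subset_left α
  by_cases hxU : x ∈ halo α E'
  · obtain ⟨z, hxz, hz⟩ := mem_nhdsGT_iff_exists_Ioc_subset.1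
      (mem_nhdsWithin_of_mem_nhds ((isOpen_halo hE' α).mem_nhds hxU))
    exact mem_halo_of_Ioc_subset hF hγα0 ((div_lt_one hα0).2 hγα) hxz (hz.trans hUF)
  refine (mem_halo_iff hF hγα0).2 ⟨y, hxy, (ENNReal.mul_lt_mul_iff_right
    (ENNReal.ofReal_pos.2 hα0).ne' ENNReal.ofReal_ne_top).1 ?_⟩
  calc ENNReal.ofReal α * (ENNReal.ofReal (γ / α) * volume (Ioc x y))
        = ENNReal.ofReal γ * volume (Ioc x y) := by
        rw [← mul_assoc, ← ENNReal.ofReal_mul hα0.le, mul_div_cancel₀ _ hα0.ne']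
    _ < volume E' := hEy
    _ ≤ ENNReal.ofReal α * volume (halo α E' ∩ Ioc x y) :=
        volume_le_mul_volume_halo_inter hE' hα0.le hα inter_subset_right hxU
    _ ≤ ENNReal.ofReal α * volume (halo α E ∩ Ioc x y) := by gcongr

end Halo

section Tauber

variable (w : ℝ → ℝ) {E : Set ℝ}

theorem wsize_le_wsize_halo (hE : MeasurableSet E) {γ : ℝ} (hγ0 : 0 ≤ γ) (hγ : γ < 1) :
    wsize w E ≤ wsize w (halo γ E) :=
  lintegral_mono' (Measure.restrict_mono_ae (ae_le_set.2 (volume_diff_halo_eq_zero hE hγ0 hγ)))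
    le_rfl

theorem div_le_tauber (hE : MeasurableSet E) (h0 : 0 < wsize w E) (hfin : wsize w E < ⊤)
    (γ : ℝ) : wsize w (halo γ E) / wsize w E ≤ tauber w γ :=
  le_iSup (fun E : {E : Set ℝ // MeasurableSet E ∧ 0 < wsize w E ∧ wsize w E < ⊤} =>
    wsize w (halo γ E.1) / wsize w E.1) ⟨E, hE, h0, hfin⟩

theorem one_le_tauber (hE : MeasurableSet E) (h0 : 0 < wsize w E) (hfin : wsize w E < ⊤)
    {γ : ℝ} (hγ0 : 0 ≤ γ) (hγ : γ < 1) : 1 ≤ tauber w γ :=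
  le_trans ((ENNReal.le_div_iff_mul_le (.inl h0.ne') (.inl hfin.ne)).2
    ((one_mul _).trans_le (wsize_le_wsize_halo w hE hγ0 hγ))) (div_le_tauber w hE h0 hfin γ)

theorem wsize_halo_le_tauber_mul (hE : MeasurableSet E) (h0 : 0 < wsize w E) {γ : ℝ}
    (hT : tauber w γ ≠ 0) : wsize w (halo γ E) ≤ tauber w γ * wsize w E := by
  rcases (le_top : wsize w E ≤ ⊤).lt_or_eq with hfin | htop
  · exact (ENNReal.div_le_iff h0.ne' hfin.ne).1 (div_le_tauber w hE h0 hfin γ)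
  · rw [htop, ENNReal.mul_top hT]
    exact le_top

theorem tauber_le_tauber_div_mul {γ α : ℝ} (hγ : 0 ≤ γ) (hγα : γ < α) (hα : α < 1) :
    tauber w γ ≤ tauber w (γ / α) * tauber w α := by
  have hα0 : 0 < α := hγ.trans_lt hγα
  refine iSup_le fun ⟨E, hE, h0, hfin⟩ => (ENNReal.div_le_iff h0.ne' hfin.ne).2 ?_
  have hF : MeasurableSet (halo α E) := (isOpen_halo hE α).measurableSet
  have hF0 : 0 < wsize w (halo α E) := h0.trans_le (wsize_le_wsize_halo w hE hα0.le hα)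
  have hT : tauber w (γ / α) ≠ 0 := (zero_lt_one.trans_le (one_le_tauber w hE h0 hfin
    (div_nonneg hγ hα0.le) ((div_lt_one hα0).2 hγα))).ne'
  calc wsize w (halo γ E) ≤ wsize w (halo (γ / α) (halo α E)) :=
        lintegral_mono_set (halo_subset_halo_div_halo hE hγ hγα hα)
    _ ≤ tauber w (γ / α) * wsize w (halo α E) := wsize_halo_le_tauber_mul w hF hF0 hT
    _ ≤ tauber w (γ / α) * (tauber w α * wsize w E) := by
        gcongr
        exact (ENNReal.div_le_iff h0.ne' hfin.ne).1 (div_le_tauber w hE h0 hfin α)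
    _ = tauber w (γ / α) * tauber w α * wsize w E := (mul_assoc _ _ _).symm

end Tauber

theorem ENNReal.tsub_le_mul_tsub_one {x a b : ℝ≥0∞} (h : x ≤ a * b) : x - a ≤ a * (b - 1) := by
  rw [tsub_le_iff_right]
  calc x ≤ a * b := h
    _ ≤ a * (b - 1 + 1) := by gcongr; exact le_tsub_add
    _ = a * (b - 1) + a := by rw [mul_add, mul_one]

theorem stmt12_general (w : ℝ → ℝ) (lam α : ℝ) (h0 : 0 < lam) (h1 : lam < α) (h2 : α < 1) :
    tauber w lam ≤ tauber w (lam / α) * tauber w α ∧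
    tauber w lam - tauber w (lam / α) ≤ tauber w (lam / α) * (tauber w α - 1) := by
  have hmul := tauber_le_tauber_div_mul w h0.le h1 h2
  exact ⟨hmul, ENNReal.tsub_le_mul_tsub_one hmul⟩

theorem stmt12 (w : ℝ → ℝ) (hw : ∀ x, 0 ≤ w x) (hloc : LocallyIntegrable w volume)
    (lam α : ℝ) (h0 : 0 < lam) (h1 : lam < α) (h2 : α < 1) :
    tauber w lam ≤ tauber w (lam / α) * tauber w α ∧
    tauber w lam - tauber w (lam / α) ≤ tauber w (lam / α) * (tauber w α - 1) :=
  stmt12_general w lam α h0 h1 h2
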